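/- arXiv:1902.06386 — 3 statements merged into one kernel-verified Lean document; each statement's English description precedes it below -/
import Mathlib

section
/- Let q : ℝ → ℝ³ be C¹ with |q'(t)| ≤ K < 1 for all t, and let x = (t₀, x₀) ∈ ℝ⁴ be an event with x₀ ≠ q(t₀). Then there exists a unique t_ret < t₀ such that t₀ − t_ret = |x₀ − q(t_ret)|, i.e. the backward light cone with apex at x intersects the world-line (t, q(t)) in exactly one event. -/
/-- For a `C¹` subluminal world-line `t ↦ (t, q(t))` with speed bound `K < 1`,
and any event `(t₀, x₀)` off the world-line (`x₀ ≠ q(t₀)`), there is a unique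
retarded time `t_ret < t₀` with `t₀ − t_ret = |x₀ − q(t_ret)|`: the backward light
cone with apex `(t₀, x₀)` meets the world-line in exactly one event. -/
theorem retarded_time_exists_unique
    (q v : ℝ → EuclideanSpace ℝ (Fin 3)) (K : ℝ)
    (hK0 : 0 ≤ K) (hK1 : K < 1)
    (hq : ∀ t, HasDerivAt q (v t) t)
    (hv : ∀ t, ‖v t‖ ≤ K)
    (hvcont : Continuous v)
    (t₀ : ℝ) (x₀ : EuclideanSpace ℝ (Fin 3)) (hx : x₀ ≠ q t₀) :
    ∃! s : ℝ, s < t₀ ∧ t₀ - s = ‖x₀ - q s‖ := by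
  -- q is K-Lipschitz
  have hlip : ∀ a b : ℝ, ‖q b - q a‖ ≤ K * ‖b - a‖ := by
    intro a b
    exact (convex_univ (𝕜 := ℝ)).norm_image_sub_le_of_norm_hasDerivWithin_le
      (fun x _ => (hq x).hasDerivWithinAt) (fun x _ => hv x)
      (Set.mem_univ a) (Set.mem_univ b)
  -- the distance function is K-Lipschitz
  have hdlip : ∀ a b : ℝ, ‖x₀ - q b‖ - ‖x₀ - q a‖ ≤ K * |b - a| := by
    intro a b
    have h1 : ‖x₀ - q b‖ - ‖x₀ - q a‖ ≤ ‖(x₀ - q b) - (x₀ - q a)‖ :=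
      norm_sub_norm_le _ _
    have h2 : (x₀ - q b) - (x₀ - q a) = q a - q b := by abel
    calc ‖x₀ - q b‖ - ‖x₀ - q a‖ ≤ ‖q a - q b‖ := by rw [h2] at h1; exact h1
      _ ≤ K * ‖a - b‖ := hlip b a
      _ = K * |b - a| := by rw [Real.norm_eq_abs, abs_sub_comm]
  have hqc : Continuous q := by
    apply continuous_iff_continuousAt.mpr
    intro x; exact (hq x).continuousAt
  set f : ℝ → ℝ := fun s => t₀ - s - ‖x₀ - q s‖ with hf
  have hfc : Continuous f := by
    apply Continuous.sub
    · exact continuous_const.sub continuous_id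
    · exact (continuous_const.sub hqc).norm
  set C : ℝ := ‖x₀ - q t₀‖ with hC
  have hCpos : 0 < C := by
    rw [hC, norm_pos_iff, sub_ne_zero]; exact hx
  set s₁ : ℝ := t₀ - (C + 1) / (1 - K) with hs₁
  have h1K : 0 < 1 - K := by linarith
  have hs₁lt : s₁ < t₀ := by
    have : 0 < (C + 1) / (1 - K) := div_pos (by linarith) h1K
    rw [hs₁]; linarith
  have hE : (t₀ - s₁) - K * (t₀ - s₁) = C + 1 := by
    rw [hs₁]; field_simp; ring
  have hfs₁ : 0 < f s₁ := by
    have hd : ‖x₀ - q s₁‖ - C ≤ K * |s₁ - t₀| := hdlip t₀ s₁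
    have habs : |s₁ - t₀| = t₀ - s₁ := by
      rw [abs_sub_comm, abs_of_pos (by linarith)]
    rw [habs] at hd
    show 0 < t₀ - s₁ - ‖x₀ - q s₁‖
    linarith [hd, hE]
  have hfs₀ : f t₀ < 0 := by
    show t₀ - t₀ - ‖x₀ - q t₀‖ < 0
    linarith [hCpos, hC]
  -- existence via IVT
  obtain ⟨s, hsmem, hsz⟩ : ∃ s ∈ Set.Icc s₁ t₀, f s = 0 := by
    have := intermediate_value_Icc' (le_of_lt hs₁lt) hfc.continuousOn
      (Set.mem_Icc.mpr ⟨le_of_lt hfs₀, le_of_lt hfs₁⟩)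
    exact this
  have hkey : t₀ - s = ‖x₀ - q s‖ := by
    have : t₀ - s - ‖x₀ - q s‖ = 0 := hsz
    linarith
  have hslt : s < t₀ := by
    rcases lt_or_eq_of_le hsmem.2 with h | h
    · exact h
    · exfalso
      rw [h] at hkey
      simp only [sub_self] at hkey
      exact hx (by rw [← sub_eq_zero]; exact (norm_eq_zero.mp hkey.symm))
  refine ⟨s, ⟨hslt, hkey⟩, ?_⟩
  rintro y ⟨hylt, hykey⟩
  by_contra hne
  have h1 : t₀ - y - (t₀ - s) = ‖x₀ - q y‖ - ‖x₀ - q s‖ := by rw [hykey, hkey]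
  have h1' : t₀ - s - (t₀ - y) = ‖x₀ - q s‖ - ‖x₀ - q y‖ := by rw [hykey, hkey]
  have h2 : ‖x₀ - q y‖ - ‖x₀ - q s‖ ≤ K * |y - s| := hdlip s y
  have h3 : ‖x₀ - q s‖ - ‖x₀ - q y‖ ≤ K * |s - y| := hdlip y s
  have h4 : |s - y| = |y - s| := abs_sub_comm s y
  rw [h4] at h3
  have ha : s - y ≤ K * |y - s| := by linarith
  have hb : y - s ≤ K * |y - s| := by linarith
  have h5 : |s - y| ≤ K * |y - s| := abs_sub_le_iff.mpr ⟨ha, hb⟩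
  rw [h4] at h5
  have h6 : 0 < |y - s| := abs_pos.mpr (sub_ne_zero.mpr hne)
  nlinarith [h5, h6]
end

section
/- Let q₁, q₂ : ℝ → ℝ³ be C¹ trajectories with speeds bounded by K < 1 coinciding on (−∞, A], and suppose their velocities on [A, A+δ] differ by at most M in sup norm, with momenta p_i bounded so that velocities v_i = p_i/√(1+p_i²) satisfy |v_i| ≤ K. Then for all t' ≤ t ≤ A+δ, with D_i(t,t') = √((t−t')² − |q_i(t)−q_i(t')|²), one has |D_1(t,t') − D_2(t,t')| ≤ C(K) ∫_{t'}^{t} |v_1(s) − v_2(s)| ds ≤ C(K) δ · sup_{[A,A+δ]} |v_1 − v_2|. -/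
open MeasureTheory

lemma sqrt_diff_aux (K T a b : ℝ) (hK0 : 0 ≤ K) (hK1 : K < 1) (hT : 0 ≤ T)
    (ha0 : 0 ≤ a) (hb0 : 0 ≤ b) (ha : a ≤ K * T) (hb : b ≤ K * T) :
    |Real.sqrt (T ^ 2 - a ^ 2) - Real.sqrt (T ^ 2 - b ^ 2)| ≤
      (2 / Real.sqrt (1 - K ^ 2)) * |a - b| := by
  set s := Real.sqrt (1 - K ^ 2) with hs
  have hs2 : s * s = 1 - K ^ 2 := Real.mul_self_sqrt (by nlinarith)
  have hs0 : 0 < s := Real.sqrt_pos.mpr (by nlinarith)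
  rcases eq_or_lt_of_le hT with hT0 | hT0
  · have haz : a = 0 := le_antisymm (by nlinarith) ha0
    have hbz : b = 0 := le_antisymm (by nlinarith) hb0
    simp [haz, hbz]
  wlog hab : b ≤ a generalizing a b
  · rw [abs_sub_comm, abs_sub_comm a b]
    exact this b a hb0 ha0 hb ha (le_of_not_ge hab)
  have hx0 : (T * s) ^ 2 ≤ T ^ 2 - a ^ 2 := by nlinarith
  have hy0 : (T * s) ^ 2 ≤ T ^ 2 - b ^ 2 := by nlinarith
  have h1 : T * s ≤ Real.sqrt (T ^ 2 - a ^ 2) := by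
    have := Real.sqrt_le_sqrt hx0
    rwa [Real.sqrt_sq (mul_nonneg hT hs0.le)] at this
  have h2 : T * s ≤ Real.sqrt (T ^ 2 - b ^ 2) := by
    have := Real.sqrt_le_sqrt hy0
    rwa [Real.sqrt_sq (mul_nonneg hT hs0.le)] at this
  have hxx : Real.sqrt (T ^ 2 - a ^ 2) * Real.sqrt (T ^ 2 - a ^ 2) = T ^ 2 - a ^ 2 :=
    Real.mul_self_sqrt (by nlinarith)
  have hyy : Real.sqrt (T ^ 2 - b ^ 2) * Real.sqrt (T ^ 2 - b ^ 2) = T ^ 2 - b ^ 2 :=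
    Real.mul_self_sqrt (by nlinarith)
  have hmono : Real.sqrt (T ^ 2 - a ^ 2) ≤ Real.sqrt (T ^ 2 - b ^ 2) :=
    Real.sqrt_le_sqrt (by nlinarith)
  rw [abs_of_nonpos (by linarith), abs_of_nonneg (by linarith)]
  rw [div_mul_eq_mul_div, le_div_iff₀ hs0]
  set X := Real.sqrt (T ^ 2 - a ^ 2)
  set Y := Real.sqrt (T ^ 2 - b ^ 2)
  nlinarith [mul_nonneg (sub_nonneg.mpr hmono) (show (0:ℝ) ≤ X + Y - 2 * (T * s) by linarith),
    mul_nonneg (sub_nonneg.mpr hab) (show (0:ℝ) ≤ 2 * T - a - b by nlinarith),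
    mul_pos hT0 hs0, mul_pos hT0 (mul_pos hT0 hs0)]

/-- Let `q₁, q₂ : ℝ → ℝ³` be `C¹` trajectories with velocities `v₁, v₂`, speeds
bounded by `K < 1`, coinciding on `(−∞, A]`.  Then for `t' ≤ t ≤ A + δ`, with
`D_i(t,t') = √((t−t')² − |q_i(t)−q_i(t')|²)`, one has
`|D₁ − D₂| ≤ C(K) ∫_{t'}^t |v₁ − v₂| ds ≤ C(K) δ sup_{[A,A+δ]} |v₁ − v₂|`. -/
theorem lorentz_distance_difference_estimate
    (q₁ q₂ v₁ v₂ : ℝ → EuclideanSpace ℝ (Fin 3)) (K A δ : ℝ)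
    (hK0 : 0 ≤ K) (hK1 : K < 1) (hδ : 0 ≤ δ)
    (hq₁ : ∀ t, HasDerivAt q₁ (v₁ t) t) (hq₂ : ∀ t, HasDerivAt q₂ (v₂ t) t)
    (hv₁ : ∀ t, ‖v₁ t‖ ≤ K) (hv₂ : ∀ t, ‖v₂ t‖ ≤ K)
    (hv₁c : Continuous v₁) (hv₂c : Continuous v₂)
    (heq : ∀ t ≤ A, q₁ t = q₂ t) (heqv : ∀ t ≤ A, v₁ t = v₂ t) :
    ∃ C : ℝ, 0 < C ∧ ∀ t' t : ℝ, t' ≤ t → t ≤ A + δ →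
      |Real.sqrt ((t - t') ^ 2 - ‖q₁ t - q₁ t'‖ ^ 2) -
          Real.sqrt ((t - t') ^ 2 - ‖q₂ t - q₂ t'‖ ^ 2)| ≤
        C * ∫ s in t'..t, ‖v₁ s - v₂ s‖ ∧
      C * (∫ s in t'..t, ‖v₁ s - v₂ s‖) ≤
        C * δ * ⨆ s ∈ Set.Icc A (A + δ), ‖v₁ s - v₂ s‖ := by
  set C : ℝ := 2 / Real.sqrt (1 - K ^ 2) with hC
  have hs0 : 0 < Real.sqrt (1 - K ^ 2) := Real.sqrt_pos.mpr (by nlinarith)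
  have hCpos : 0 < C := by positivity
  -- sup facts
  set S : ℝ := ⨆ s ∈ Set.Icc A (A + δ), ‖v₁ s - v₂ s‖ with hSdef
  have hbdd : BddAbove (Set.range fun s => ⨆ _ : s ∈ Set.Icc A (A + δ), ‖v₁ s - v₂ s‖) := by
    refine ⟨2 * K, ?_⟩
    rintro x ⟨u, rfl⟩
    by_cases h : u ∈ Set.Icc A (A + δ)
    · refine le_trans (le_of_eq (ciSup_pos h)) ?_
      calc ‖v₁ u - v₂ u‖ ≤ ‖v₁ u‖ + ‖v₂ u‖ := norm_sub_le _ _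
        _ ≤ 2 * K := by linarith [hv₁ u, hv₂ u]
    · haveI : IsEmpty (u ∈ Set.Icc A (A + δ)) := ⟨h⟩
      refine le_trans (le_of_eq (Real.iSup_of_isEmpty _)) ?_
      positivity
  have hSle : ∀ u ∈ Set.Icc A (A + δ), ‖v₁ u - v₂ u‖ ≤ S := by
    intro u hu
    exact le_trans (le_of_eq (ciSup_pos (f := fun _ => ‖v₁ u - v₂ u‖) hu).symm) (le_ciSup hbdd u)
  have hS0 : 0 ≤ S :=
    le_trans (norm_nonneg _) (hSle A ⟨le_refl A, by linarith⟩)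
  -- integrability
  have hint : ∀ a b : ℝ, IntervalIntegrable (fun u => ‖v₁ u - v₂ u‖) volume a b :=
    fun a b => ((hv₁c.sub hv₂c).norm).intervalIntegrable a b
  have hint1 : ∀ a b : ℝ, IntervalIntegrable v₁ volume a b :=
    fun a b => hv₁c.intervalIntegrable a b
  have hint2 : ∀ a b : ℝ, IntervalIntegrable v₂ volume a b :=
    fun a b => hv₂c.intervalIntegrable a b
  -- integral bound over intervals inside [A, A+δ]
  have key : ∀ u t : ℝ, A ≤ u → u ≤ t → t ≤ A + δ →
      (∫ s in u..t, ‖v₁ s - v₂ s‖) ≤ δ * S := by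
    intro u t hAu hut ht
    have h1 : (∫ s in u..t, ‖v₁ s - v₂ s‖) ≤ ∫ _ in u..t, S := by
      refine intervalIntegral.integral_mono_on hut (hint u t) intervalIntegrable_const ?_
      intro s hs
      exact hSle s ⟨le_trans hAu hs.1, le_trans hs.2 ht⟩
    rw [intervalIntegral.integral_const, smul_eq_mul] at h1
    have : (t - u) * S ≤ δ * S := mul_le_mul_of_nonneg_right (by linarith) hS0
    linarith
  refine ⟨C, hCpos, fun t' t htt' ht => ?_⟩
  set I : ℝ := ∫ s in t'..t, ‖v₁ s - v₂ s‖ with hIdef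
  -- I ≤ δ * S
  have hIle : I ≤ δ * S := by
    rcases le_or_gt t A with h | h
    · have hz : I = 0 := by
        rw [hIdef]
        rw [intervalIntegral.integral_congr (g := fun _ => (0:ℝ)) ?_]
        · simp
        · intro s hs
          rw [Set.uIcc_of_le htt'] at hs
          simp [heqv s (le_trans hs.2 h)]
      rw [hz]; positivity
    · rcases le_or_gt t' A with h' | h'
      · have hsplit : (∫ s in t'..A, ‖v₁ s - v₂ s‖) + (∫ s in A..t, ‖v₁ s - v₂ s‖) = I :=
          intervalIntegral.integral_add_adjacent_intervals (hint t' A) (hint A t)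
        have hz : (∫ s in t'..A, ‖v₁ s - v₂ s‖) = 0 := by
          rw [intervalIntegral.integral_congr (g := fun _ => (0:ℝ)) ?_]
          · simp
          · intro s hs
            rw [Set.uIcc_of_le h'] at hs
            simp [heqv s hs.2]
        have h2 := key A t le_rfl h.le ht
        linarith
      · exact key t' t h'.le htt' ht
  constructor
  · -- main Lorentz distance estimate
    have ftc1 : (∫ s in t'..t, v₁ s) = q₁ t - q₁ t' :=
      intervalIntegral.integral_eq_sub_of_hasDerivAt (fun s _ => hq₁ s) (hint1 t' t)
    have ftc2 : (∫ s in t'..t, v₂ s) = q₂ t - q₂ t' :=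
      intervalIntegral.integral_eq_sub_of_hasDerivAt (fun s _ => hq₂ s) (hint2 t' t)
    have hb1 : ‖q₁ t - q₁ t'‖ ≤ K * (t - t') := by
      have := intervalIntegral.norm_integral_le_of_norm_le_const (C := K)
        (f := v₁) (a := t') (b := t) (fun s _ => hv₁ s)
      rw [ftc1, abs_of_nonneg (by linarith)] at this
      exact this
    have hb2 : ‖q₂ t - q₂ t'‖ ≤ K * (t - t') := by
      have := intervalIntegral.norm_integral_le_of_norm_le_const (C := K)
        (f := v₂) (a := t') (b := t) (fun s _ => hv₂ s)
      rw [ftc2, abs_of_nonneg (by linarith)] at this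
      exact this
    have hdiff : ‖(q₁ t - q₁ t') - (q₂ t - q₂ t')‖ ≤ I := by
      have heqI : (q₁ t - q₁ t') - (q₂ t - q₂ t') = ∫ s in t'..t, (v₁ s - v₂ s) := by
        rw [intervalIntegral.integral_sub (hint1 t' t) (hint2 t' t), ftc1, ftc2]
      rw [heqI, hIdef]
      exact intervalIntegral.norm_integral_le_integral_norm htt'
    have habs : |‖q₁ t - q₁ t'‖ - ‖q₂ t - q₂ t'‖| ≤ I :=
      le_trans (abs_norm_sub_norm_le _ _) hdiff
    have hmain := sqrt_diff_aux K (t - t') ‖q₁ t - q₁ t'‖ ‖q₂ t - q₂ t'‖ hK0 hK1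
      (by linarith) (norm_nonneg _) (norm_nonneg _) hb1 hb2
    calc |Real.sqrt ((t - t') ^ 2 - ‖q₁ t - q₁ t'‖ ^ 2) -
          Real.sqrt ((t - t') ^ 2 - ‖q₂ t - q₂ t'‖ ^ 2)|
        ≤ C * |‖q₁ t - q₁ t'‖ - ‖q₂ t - q₂ t'‖| := hmain
      _ ≤ C * I := mul_le_mul_of_nonneg_left habs hCpos.le
  · rw [mul_assoc]
    exact mul_le_mul_of_nonneg_left hIle hCpos.le
end

section
/- Let A₀ < A₁ ≤ ∞ and let v : (−∞, A₁) → ℝ³ be measurable with v(t) = 0 for t ≤ A₀ and |v(t)| < 1 for all t, and set q(t) − q(t') = ∫_{t'}^t v(s) ds. Then for every t ∈ (A₀, A₁) the electric self-field estimate holds: ∫_{−∞}^t 2|t−t'| / (1 + D(t,t')²)^{5/4} dt' < ∞, where D(t,t')² = (t−t')² − |q(t)−q(t')|², and moreover this quantity is bounded by a function of t alone (independent of the particular v), namely by ∫_{−∞}^{A₀−1} 2|t−t'| (1 + (t−t')² (1 − ((t−A₀)/(t−t'))²))^{−5/4} dt' + |t−A₀+1|². -/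
/-!
Before `A₀` the particle is at rest, so for `t' ≤ A₀ < t` its displacement `|q(t) − q(t')|` is at
most `t − A₀`, whence `D(t,t')² ≥ (t − t')² − (t − A₀)²`. On `(−∞, A₀ − 1]` the integrand is
therefore dominated by `2(t − t')(1 + (t − t')² − (t − A₀)²)^{−5/4}`, which decays like
`(t − t')^{−3/2}` and is integrable. On the bounded remainder `(A₀ − 1, t]` subluminality gives
`D² ≥ 0`, so the integrand is at most `2(t − t')`, whose integral is `(t − A₀ + 1)²`.
-/

open MeasureTheory Set Filter

section Trajectory

variable {E : Type*} [NormedAddCommGroup E] [NormedSpace ℝ E] {v : ℝ → E}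

theorem norm_intervalIntegral_le_abs_sub (hv : ∀ s, ‖v s‖ ≤ 1) (a b : ℝ) :
    ‖∫ s in a..b, v s‖ ≤ |b - a| := by
  simpa using intervalIntegral.norm_integral_le_of_norm_le_const (a := a) (b := b) fun s _ => hv s

theorem intervalIntegral_eq_of_forall_le_eq_zero {a t' t : ℝ}
    (hvi : ∀ x y, IntervalIntegrable v volume x y) (hzero : ∀ s ≤ a, v s = 0) (ht' : t' ≤ a) :
    ∫ s in t'..t, v s = ∫ s in a..t, v s := by
  have hrest : ∫ s in t'..a, v s = 0 := by
    rw [intervalIntegral.integral_congr (g := fun _ => 0) fun s hs => ?_,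
      intervalIntegral.integral_zero]
    rw [uIcc_of_le ht'] at hs
    exact hzero s hs.2
  rw [← intervalIntegral.integral_add_adjacent_intervals (hvi t' a) (hvi a t), hrest, zero_add]

theorem continuous_intervalIntegral_left (hvi : ∀ x y, IntervalIntegrable v volume x y) (t : ℝ) :
    Continuous fun t' => ∫ s in t'..t, v s := by
  simp_rw [intervalIntegral.integral_symm t]
  exact (intervalIntegral.continuous_primitive hvi t).neg

end Trajectory

theorem integrableOn_Ioi_mul_rpow_neg {a b p : ℝ} (ha : 0 ≤ a) (hb : 0 < b + a ^ 2)
    (hp : 1 < p) : IntegrableOn (fun u => u * (b + u ^ 2) ^ (-p)) (Ioi a) := by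
  have hbase : ∀ u ∈ Ici a, 0 < b + u ^ 2 := fun u hu => by
    have : a ^ 2 ≤ u ^ 2 := pow_le_pow_left₀ ha hu 2
    linarith
  refine integrableOn_Ioi_deriv_of_nonneg' (g := fun u => (b + u ^ 2) ^ (1 - p) / (2 * (1 - p)))
    (l := 0) (fun u hu => ?_) (fun u hu => ?_) ?_
  · have hd := (((hasDerivAt_pow 2 u).const_add b).rpow_const (p := 1 - p)
      (Or.inl (hbase u hu).ne')).div_const (2 * (1 - p))
    refine hd.congr_deriv ?_
    rw [show 1 - p - 1 = -p by ring]
    field_simp [(by linarith : (1 - p) ≠ 0)]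
    push_cast
    ring
  · exact mul_nonneg (ha.trans hu.le) (Real.rpow_nonneg (hbase u (Ioi_subset_Ici_self hu)).le _)
  · have hpow : Tendsto (fun x : ℝ => x ^ (1 - p)) atTop (nhds 0) := by
      simpa using tendsto_rpow_neg_atTop (y := p - 1) (by linarith)
    have hsq : Tendsto (fun u : ℝ => b + u ^ 2) atTop atTop :=
      tendsto_atTop_add_const_left _ _ (tendsto_pow_atTop two_ne_zero)
    simpa using (hpow.comp hsq).div_const (2 * (1 - p))

theorem integrableOn_Iio_comp_sub_left {F : ℝ → ℝ} {a : ℝ} (hF : IntegrableOn F (Ioi a))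
    (t : ℝ) : IntegrableOn (fun x => F (t - x)) (Iio (t - a)) := by
  have hpre : (fun x : ℝ => t - x) ⁻¹' Ioi a = Iio (t - a) := by
    ext x
    simp only [mem_preimage, mem_Ioi, mem_Iio]
    constructor <;> intro h <;> linarith
  rw [← hpre]
  exact ((Measure.measurePreserving_sub_left volume t).integrableOn_comp_preimage
    (MeasurableEquiv.subLeft t).measurableEmbedding).2 hF

theorem integrableOn_Iic_and_setIntegral_le_add {f g h : ℝ → ℝ} {a b : ℝ} (hab : a ≤ b)
    (hf : AEStronglyMeasurable f) (hf0 : ∀ x ≤ b, 0 ≤ f x)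
    (hg : IntegrableOn g (Iic a)) (hfg : ∀ x ∈ Iic a, f x ≤ g x)
    (hh : IntegrableOn h (Ioc a b)) (hfh : ∀ x ∈ Ioc a b, f x ≤ h x) :
    IntegrableOn f (Iic b) ∧ ∫ x in Iic b, f x ≤ (∫ x in Iic a, g x) + ∫ x in Ioc a b, h x := by
  have dominated {s : Set ℝ} {k : ℝ → ℝ} (hs : MeasurableSet s) (hsb : s ⊆ Iic b)
      (hk : IntegrableOn k s) (hfk : ∀ x ∈ s, f x ≤ k x) : IntegrableOn f s := by
    refine hk.mono' hf.restrict ((ae_restrict_iff' hs).2 (ae_of_all _ fun x hx => ?_))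
    rw [Real.norm_of_nonneg (hf0 x (hsb hx))]
    exact hfk x hx
  have hfa := dominated measurableSet_Iic (Iic_subset_Iic.2 hab) hg hfg
  have hfab := dominated measurableSet_Ioc Ioc_subset_Iic_self hh hfh
  rw [← Iic_union_Ioc_eq_Iic hab]
  refine ⟨hfa.union hfab, ?_⟩
  rw [setIntegral_union (Iic_disjoint_Ioc le_rfl) measurableSet_Ioc hfa hfab]
  exact add_le_add (setIntegral_mono_on hfa hg measurableSet_Iic hfg)
    (setIntegral_mono_on hfab hh measurableSet_Ioc hfh)

theorem setIntegral_Ioc_two_mul_sub {a b : ℝ} (hab : a ≤ b) :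
    ∫ x in Ioc a b, 2 * (b - x) = (b - a) ^ 2 := by
  rw [← intervalIntegral.integral_of_le hab, intervalIntegral.integral_const_mul,
    intervalIntegral.integral_comp_sub_left (fun x => x)]
  simp only [sub_self, integral_id, ne_eq, OfNat.ofNat_ne_zero, not_false_eq_true, zero_pow,
    sub_zero]
  ring

/-- `selfFieldKernel (t - t') |q(t) − q(t')|` is the integrand `2|t−t'| / (1 + D(t,t')²)^{5/4}`. -/
noncomputable def selfFieldKernel (x d : ℝ) : ℝ := 2 * |x| / (1 + (x ^ 2 - d ^ 2)) ^ ((5 : ℝ) / 4)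

section selfFieldKernel

variable {x c d : ℝ}

theorem one_le_one_add_sq_sub_sq (h : |d| ≤ |x|) : 1 ≤ 1 + (x ^ 2 - d ^ 2) := by
  nlinarith [sq_le_sq.2 h]

theorem selfFieldKernel_nonneg (h : |d| ≤ |x|) : 0 ≤ selfFieldKernel x d :=
  div_nonneg (by positivity) (Real.rpow_nonneg (zero_le_one.trans (one_le_one_add_sq_sub_sq h)) _)

theorem selfFieldKernel_le_two_mul_abs (h : |d| ≤ |x|) : selfFieldKernel x d ≤ 2 * |x| :=
  div_le_self (by positivity) (Real.one_le_rpow (one_le_one_add_sq_sub_sq h) (by norm_num))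

theorem selfFieldKernel_le_of_le (hd : 0 ≤ d) (hdc : d ≤ c) (hcx : c ≤ |x|) :
    selfFieldKernel x d ≤ selfFieldKernel x c := by
  have hc : |c| ≤ |x| := by rwa [abs_of_nonneg (hd.trans hdc)]
  have hbase := one_le_one_add_sq_sub_sq hc
  refine div_le_div_of_nonneg_left (by positivity) (Real.rpow_pos_of_pos (by linarith) _)
    (Real.rpow_le_rpow (by linarith) (by nlinarith) (by norm_num))

theorem selfFieldKernel_eq (hx : x ≠ 0) (hc : |c| ≤ |x|) :
    selfFieldKernel x c = 2 * |x| * (1 + x ^ 2 * (1 - (c / x) ^ 2)) ^ (-(5 : ℝ) / 4) := by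
  have hbase : 1 + x ^ 2 * (1 - (c / x) ^ 2) = 1 + (x ^ 2 - c ^ 2) := by field_simp
  rw [hbase, neg_div, Real.rpow_neg (zero_le_one.trans (one_le_one_add_sq_sub_sq hc)),
    selfFieldKernel, div_eq_mul_inv]

theorem integrableOn_Ioi_selfFieldKernel (hc : 0 ≤ c) :
    IntegrableOn (fun x => selfFieldKernel x c) (Ioi c) := by
  refine IntegrableOn.congr_fun ((integrableOn_Ioi_mul_rpow_neg hc (b := 1 - c ^ 2)
    (by linarith) (by norm_num : (1 : ℝ) < 5 / 4)).const_mul 2) (fun x hx => ?_) measurableSet_Ioi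
  have hx0 : 0 < x := hc.trans_lt hx
  have hbase := one_le_one_add_sq_sub_sq (abs_le_abs_of_nonneg hc (le_of_lt hx))
  rw [selfFieldKernel, abs_of_pos hx0, show 1 - c ^ 2 + x ^ 2 = 1 + (x ^ 2 - c ^ 2) by ring,
    Real.rpow_neg (by linarith)]
  ring

end selfFieldKernel

/-- A trajectory starting at rest: `v` measurable, `v = 0` on `(−∞, A₀]`, `|v| < 1`,
with position increments `q(t) − q(t') = ∫_{t'}^t v`.  For every `t ∈ (A₀, A₁)`
the electric self-field estimate holds:
`∫_{−∞}^t 2|t−t'|/(1+D(t,t')²)^{5/4} dt' < ∞`, with `D² = (t−t')² − |q(t)−q(t')|²`,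
and the integral is bounded by
`∫_{−∞}^{A₀−1} 2|t−t'|(1+(t−t')²(1−((t−A₀)/(t−t'))²))^{−5/4} dt' + |t−A₀+1|²`,
a quantity depending on `t` alone. -/
theorem electric_self_field_estimate
    (A₀ : ℝ) (A₁ : EReal) (v : ℝ → EuclideanSpace ℝ (Fin 3))
    (hmeas : Measurable v)
    (hzero : ∀ t ≤ A₀, v t = 0)
    (hsub : ∀ t, ‖v t‖ < 1) :
    ∀ t : ℝ, A₀ < t → (t : EReal) < A₁ →
      IntegrableOn
          (fun t' : ℝ => 2 * |t - t'| /
            (1 + ((t - t') ^ 2 - ‖∫ s in t'..t, v s‖ ^ 2)) ^ ((5 : ℝ) / 4))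
          (Set.Iic t) ∧
        (∫ t' in Set.Iic t, 2 * |t - t'| /
            (1 + ((t - t') ^ 2 - ‖∫ s in t'..t, v s‖ ^ 2)) ^ ((5 : ℝ) / 4)) ≤
          (∫ t' in Set.Iic (A₀ - 1), 2 * |t - t'| *
              (1 + (t - t') ^ 2 * (1 - ((t - A₀) / (t - t')) ^ 2)) ^ (-(5 : ℝ) / 4))
            + |t - A₀ + 1| ^ 2 := by
  intro t ht _
  have hv : ∀ s, ‖v s‖ ≤ 1 := fun s => (hsub s).le
  have hvi : ∀ a b, IntervalIntegrable v volume a b := fun a b =>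
    intervalIntegrable_const.mono_fun' hmeas.aestronglyMeasurable (ae_of_all _ hv)
  have hD : ∀ t', |‖∫ s in t'..t, v s‖| ≤ |t - t'| := fun t' => by
    rw [abs_norm]
    exact norm_intervalIntegral_le_abs_sub hv t' t
  have hrest : ∀ t' ≤ A₀, ‖∫ s in t'..t, v s‖ ≤ t - A₀ := fun t' ht' => by
    rw [intervalIntegral_eq_of_forall_le_eq_zero hvi hzero ht', ← abs_of_pos (sub_pos.2 ht)]
    exact norm_intervalIntegral_le_abs_sub hv A₀ t
  have hgap : ∀ t' ∈ Iic (A₀ - 1), t - A₀ ≤ |t - t'| := fun t' ht' => by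
    rw [abs_of_pos (by linarith [mem_Iic.1 ht'])]
    linarith [mem_Iic.1 ht']
  have hmeasK : Measurable fun t' => selfFieldKernel (t - t') ‖∫ s in t'..t, v s‖ := by
    have := (continuous_intervalIntegral_left hvi t).measurable
    unfold selfFieldKernel
    fun_prop
  obtain ⟨hint, hle⟩ := integrableOn_Iic_and_setIntegral_le_add (by linarith : A₀ - 1 ≤ t)
    hmeasK.aestronglyMeasurable (fun t' _ => selfFieldKernel_nonneg (hD t'))
    ((integrableOn_Iio_comp_sub_left (integrableOn_Ioi_selfFieldKernel (sub_pos.2 ht).le) t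
      ).mono_set (Iic_subset_Iio.2 (by linarith)))
    (fun t' ht' => selfFieldKernel_le_of_le (norm_nonneg _)
      (hrest t' (by linarith [mem_Iic.1 ht'])) (hgap t' ht'))
    (by fun_prop : Continuous fun t' : ℝ => 2 * (t - t')).integrableOn_Ioc
    (fun t' ht' => (selfFieldKernel_le_two_mul_abs (hD t')).trans_eq
      (by rw [abs_of_nonneg (sub_nonneg.2 ht'.2)]))
  refine ⟨hint, hle.trans_eq ?_⟩
  rw [setIntegral_Ioc_two_mul_sub (by linarith), ← sq_abs, sub_sub_eq_add_sub, add_sub_right_comm,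
    setIntegral_congr_fun measurableSet_Iic fun t' ht' =>
      selfFieldKernel_eq (by linarith [mem_Iic.1 ht'])
        ((abs_of_pos (sub_pos.2 ht)).trans_le (hgap t' ht'))]
end
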